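/- arXiv:0812.1239 — 5 statements merged into one kernel-verified Lean document; each statement's English description precedes it below -/
import Mathlib

section
/- If a compact connected metric space (continuum) X is connected im kleinen at every point, then X is locally connected. -/
theorem isOpen_connectedComponentIn_of_connectedImKleinen {X : Type*} [TopologicalSpace X]
    (h : ∀ x : X, ∀ U : Set X, IsOpen U → x ∈ U →
      ∃ C : Set X, C ⊆ U ∧ IsConnected C ∧ x ∈ interior C)
    {F : Set X} (hF : IsOpen F) (x : X) : IsOpen (connectedComponentIn F x) := by
  refine isOpen_iff_mem_nhds.2 fun y hy => ?_
  obtain ⟨C, hCF, hC, hyC⟩ := h y F hF (connectedComponentIn_subset F x hy)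
  have hC_sub : C ⊆ connectedComponentIn F x :=
    connectedComponentIn_eq hy ▸ hC.isPreconnected.subset_connectedComponentIn
      (interior_subset hyC) hCF
  exact Filter.mem_of_superset (isOpen_interior.mem_nhds hyC) (interior_subset.trans hC_sub)

theorem locallyConnected_of_connectedImKleinen_general {X : Type*} [MetricSpace X]
    (h : ∀ x : X, ∀ U : Set X, IsOpen U → x ∈ U →
      ∃ C : Set X, C ⊆ U ∧ IsConnected C ∧ x ∈ interior C) :
    LocallyConnectedSpace X :=
  locallyConnectedSpace_iff_connectedComponentIn_open.2 fun _ hF x _ =>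
    isOpen_connectedComponentIn_of_connectedImKleinen h hF x

/-- If a continuum `X` (a nonempty compact connected metric space) is connected im
kleinen at every point, then `X` is locally connected. -/
theorem locallyConnected_of_connectedImKleinen {X : Type*} [MetricSpace X]
    [CompactSpace X] [ConnectedSpace X] [Nonempty X]
    (h : ∀ x : X, ∀ U : Set X, IsOpen U → x ∈ U →
      ∃ C : Set X, C ⊆ U ∧ IsConnected C ∧ x ∈ interior C) :
    LocallyConnectedSpace X :=
  locallyConnected_of_connectedImKleinen_general h
end

section
/- Let J be a planar continuum with connected complement and empty interior, and let K₀, K₁, K₂, ... be a sequence of subcontinua of J such that K_i ∩ K_{i+1} ≠ ∅ for all i and such that intersections K_i ∩ K_j for |i - j| ≥ 2 can only be nonempty if they meet K_{i} ∩ K_{i+1}; suppose in addition that diam(K_i) → 0. Then the set of limit points of the sequence (K_i) (points x such that every neighborhood of x meets infinitely many K_i) is a connected set. -/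
/-!
The limit set is the intersection of the decreasing closed tails `closure (⋃ i ≥ N, K i)`.
Each tail is connected by the chain condition and compact inside `J`, and a directed
intersection of compact connected sets in a Hausdorff space is connected.
-/

open Set Filter Topology

def limitSet {X : Type*} [TopologicalSpace X] (K : ℕ → Set X) : Set X :=
  {x | ∀ U ∈ 𝓝 x, {i | (K i ∩ U).Nonempty}.Infinite}

theorem IsCompact.isConnected_iInter_of_directed {X ι : Type*} [TopologicalSpace X] [T2Space X]
    [Nonempty ι] {C : ι → Set X} (hdir : Directed (· ⊇ ·) C) (hc : ∀ i, IsCompact (C i))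
    (hconn : ∀ i, IsConnected (C i)) : IsConnected (⋂ i, C i) := by
  have hclosed : ∀ i, IsClosed (C i) := fun i => (hc i).isClosed
  set S := ⋂ i, C i
  have hS : IsCompact S := (hc (Classical.arbitrary ι)).of_isClosed_subset
    (isClosed_iInter hclosed) (iInter_subset C _)
  refine ⟨IsCompact.nonempty_iInter_of_directed_nonempty_isCompact_isClosed C hdir
    (fun i => (hconn i).nonempty) hc hclosed, ?_⟩
  rw [isPreconnected_iff_subset_of_fully_disjoint_closed hS.isClosed]
  intro A B hA hB hSAB hAB
  -- Separate the two closed pieces of `S` by open sets; some `C i` already lies in their union.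
  obtain ⟨U, V, hU, hV, hAU, hBV, hUV⟩ := SeparatedNhds.of_isCompact_isCompact
    (hS.inter_right hA) (hS.inter_right hB) (hAB.mono inter_subset_right inter_subset_right)
  have hSUV : S ⊆ U ∪ V := fun x hx =>
    (hSAB hx).imp (fun h => hAU ⟨hx, h⟩) (fun h => hBV ⟨hx, h⟩)
  obtain ⟨i, hi⟩ := exists_subset_nhds_of_isCompact hdir hc
    fun x hx => (hU.union hV).mem_nhds (hSUV hx)
  have hSi : S ⊆ C i := iInter_subset C i
  rcases (hconn i).isPreconnected.subset_or_subset hU hV hUV hi with hiU | hiV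
  · refine Or.inl fun x hx => (hSAB hx).resolve_right fun hxB => ?_
    exact hUV.ne_of_mem (hiU (hSi hx)) (hBV ⟨hx, hxB⟩) rfl
  · refine Or.inr fun x hx => (hSAB hx).resolve_left fun hxA => ?_
    exact hUV.ne_of_mem (hAU ⟨hx, hxA⟩) (hiV (hSi hx)) rfl

theorem limitSet_eq_iInter_closure_biUnion {X : Type*} [TopologicalSpace X] (K : ℕ → Set X) :
    limitSet K = ⋂ N, closure (⋃ i ≥ N, K i) := by
  ext x
  simp only [limitSet, mem_ofPred_eq, mem_iInter, mem_closure_iff_nhds, inter_iUnion₂,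
    nonempty_iUnion, exists_prop, ge_iff_le, ← Nat.frequently_atTop_iff_infinite,
    frequently_atTop, inter_comm]
  exact ⟨fun h N U hU => h U hU N, fun h U hU N => h N U hU⟩

theorem isConnected_limitSet_of_chain {X : Type*} [TopologicalSpace X] [T2Space X]
    {J : Set X} (hJ : IsCompact J) {K : ℕ → Set X} (hKJ : ∀ i, K i ⊆ J)
    (hKconn : ∀ i, IsConnected (K i)) (hchain : ∀ i, (K i ∩ K (i + 1)).Nonempty) :
    IsConnected (limitSet K) := by
  rw [limitSet_eq_iInter_closure_biUnion]
  have htail : ∀ N, IsConnected (⋃ i ≥ N, K i) := fun N =>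
    IsConnected.biUnion_of_chain nonempty_Ici ordConnected_Ici (fun i _ => hKconn i)
      fun i _ _ => hchain i
  refine IsCompact.isConnected_iInter_of_directed ?_ ?_ fun N => (htail N).closure
  · exact Antitone.directed_ge fun M N hMN =>
      closure_mono <| biUnion_subset_biUnion_left fun i hi => le_trans hMN hi
  · exact fun N => hJ.of_isClosed_subset isClosed_closure <|
      closure_minimal (iUnion₂_subset fun i _ => hKJ i) hJ.isClosed

theorem limit_set_of_chain_connected_general (J : Set ℂ)
    (hJc : IsCompact J)
    (K : ℕ → Set ℂ)
    (hKJ : ∀ i, K i ⊆ J) (hKconn : ∀ i, IsConnected (K i))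
    (hchain : ∀ i, (K i ∩ K (i + 1)).Nonempty) :
    IsConnected {x : ℂ | ∀ U ∈ nhds x, {i : ℕ | (K i ∩ U).Nonempty}.Infinite} :=
  isConnected_limitSet_of_chain hJc hKJ hKconn hchain

/-- Let `J ⊆ ℂ` be a continuum with connected complement and empty interior, and let
`K 0, K 1, …` be subcontinua of `J` with consecutive members intersecting, such that an
intersection `K i ∩ K j` with `j ≥ i + 2` can only be nonempty if it meets `K i ∩ K (i+1)`,
and with `diam (K i) → 0`. Then the set of limit points of the sequence `(K i)` (the
points every neighborhood of which meets infinitely many of the `K i`) is a connected set. -/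
theorem limit_set_of_chain_connected (J : Set ℂ)
    (hJc : IsCompact J) (hJconn : IsConnected J)
    (hJcomp : IsConnected Jᶜ) (hJint : interior J = ∅)
    (K : ℕ → Set ℂ)
    (hKJ : ∀ i, K i ⊆ J) (hKc : ∀ i, IsCompact (K i)) (hKconn : ∀ i, IsConnected (K i))
    (hchain : ∀ i, (K i ∩ K (i + 1)).Nonempty)
    (hskip : ∀ i j, i + 2 ≤ j → (K i ∩ K j).Nonempty →
      ((K i ∩ K j) ∩ (K i ∩ K (i + 1))).Nonempty)
    (hdiam : Filter.Tendsto (fun i => EMetric.diam (K i)) Filter.atTop (nhds 0)) :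
    IsConnected {x : ℂ | ∀ U ∈ nhds x, {i : ℕ | (K i ∩ U).Nonempty}.Infinite} :=
  limit_set_of_chain_connected_general J hJc K hKJ hKconn hchain
end

section
/- Let F ⊆ ℝ/ℤ be a nonempty closed set invariant under the doubling map σ (σ(F) ⊆ F) such that the orbit of every point of F is contained in the closed half-circle [α, α + 1/2] for some fixed α with 0 < α < 1/2. Then F has empty interior, i.e., F is nowhere dense in the circle. -/
/-!
Multiplication by `m ≥ 2` expands arcs: `m ^ n` maps any arc of length `p / m ^ n` onto the
whole circle `ℝ / pℤ`. So if `F` has nonempty interior, the doubling orbit of some point of `F`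
hits `α + 3/4`, which lies outside `[α, α + 1/2]`.
-/

open Set

namespace AddCircle

variable {p : ℝ}

theorem iterate_add_self_eq_two_pow_nsmul (n : ℕ) (x : AddCircle p) :
    (fun y : AddCircle p => y + y)^[n] x = 2 ^ n • x := by
  induction n with
  | zero => simp
  | succ n ih => rw [Function.iterate_succ_apply', ih, pow_succ, mul_nsmul, two_nsmul]

theorem coe_notMem_image_Icc [Fact (0 < p)] {a b t : ℝ} (hbt : b < t) (hta : t < a + p) :
    (t : AddCircle p) ∉ ((↑) : ℝ → AddCircle p) '' Icc a b := by
  rintro ⟨s, ⟨has, hsb⟩, hst⟩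
  have hat : a ≤ t := by linarith
  rw [coe_eq_coe_iff_of_mem_Ico ⟨has, by linarith⟩ ⟨hat, hta⟩] at hst
  linarith

theorem exists_mem_Ico_nsmul_coe_eq (hp : 0 < p) (t : ℝ) {m : ℕ} (hm : 0 < m)
    (y : AddCircle p) : ∃ s ∈ Ico t (t + p / m), m • (s : AddCircle p) = y := by
  obtain ⟨u, rfl⟩ := QuotientAddGroup.mk_surjective y
  have hm' : (0 : ℝ) < m := Nat.cast_pos.2 hm
  have hr := toIcoMod_mem_Ico hp 0 (u - m * t)
  refine ⟨t + toIcoMod hp 0 (u - m * t) / m, ⟨?_, ?_⟩, ?_⟩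
  · have := div_nonneg hr.1 hm'.le
    linarith
  · have := div_lt_div_of_pos_right (zero_add p ▸ hr.2) hm'
    linarith
  · rw [← coe_nsmul, nsmul_eq_mul, mul_add, mul_div_cancel₀ _ hm'.ne',
      ← self_sub_toIcoDiv_zsmul, ← add_sub_assoc, add_sub_cancel, sub_eq_add_neg, coe_add,
      ← neg_zsmul, coe_zsmul, coe_period, smul_zero, add_zero]

theorem exists_pow_nsmul_mem_eq [Fact (0 < p)] {m : ℕ} (hm : 1 < m) {U : Set (AddCircle p)}
    (hU : IsOpen U) (hne : U.Nonempty) (y : AddCircle p) :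
    ∃ n : ℕ, ∃ x ∈ U, m ^ n • x = y := by
  obtain ⟨x, hx⟩ := hne
  obtain ⟨t, rfl⟩ := QuotientAddGroup.mk_surjective x
  have hp : 0 < p := Fact.out
  obtain ⟨ε, hε, hball⟩ := Metric.isOpen_iff.1 (hU.preimage (AddCircle.continuous_mk' p)) t hx
  obtain ⟨n, hn⟩ := pow_unbounded_of_one_lt (p / ε) (by exact_mod_cast hm : (1 : ℝ) < m)
  obtain ⟨s, hs, hsy⟩ := exists_mem_Ico_nsmul_coe_eq hp t (pow_pos (zero_lt_one.trans hm) n) y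
  refine ⟨n, s, hball ?_, hsy⟩
  have hmn : p / (m ^ n : ℕ) < ε := by
    push_cast
    rw [div_lt_iff₀ (by positivity), mul_comm, ← div_lt_iff₀ hε]
    exact hn
  rw [Metric.mem_ball, Real.dist_eq, abs_of_nonneg (by linarith [hs.1])]
  linarith [hs.2]

end AddCircle

theorem invariant_set_in_halfcircle_nowhere_dense_general
    (F : Set (AddCircle (1 : ℝ)))
    (α : ℝ)
    (horb : ∀ x ∈ F, ∀ n : ℕ,
      (fun y : AddCircle (1 : ℝ) => y + y)^[n] x ∈
        (fun t : ℝ => (t : AddCircle (1 : ℝ))) '' Set.Icc α (α + 1 / 2)) :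
    interior F = ∅ := by
  rw [← Set.not_nonempty_iff_eq_empty]
  intro hne
  obtain ⟨n, x, hx, hxy⟩ := AddCircle.exists_pow_nsmul_mem_eq one_lt_two isOpen_interior hne
    ((α + 3 / 4 : ℝ) : AddCircle (1 : ℝ))
  have hmem := horb x (interior_subset hx) n
  rw [AddCircle.iterate_add_self_eq_two_pow_nsmul, hxy] at hmem
  exact AddCircle.coe_notMem_image_Icc (by linarith) (by linarith) hmem

/-- Let `F` be a nonempty closed subset of the circle `ℝ/ℤ`, invariant under the doubling
map `σ(x) = x + x`, such that the whole forward orbit of every point of `F` is contained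
in the closed half-circle `[α, α + 1/2]` for some fixed `0 < α < 1/2`. Then `F` has empty
interior (`F` is nowhere dense in the circle). -/
theorem invariant_set_in_halfcircle_nowhere_dense
    (F : Set (AddCircle (1 : ℝ))) (hFne : F.Nonempty) (hFcl : IsClosed F)
    (hFinv : (fun x => x + x) '' F ⊆ F)
    (α : ℝ) (hα0 : 0 < α) (hα1 : α < 1 / 2)
    (horb : ∀ x ∈ F, ∀ n : ℕ,
      (fun y : AddCircle (1 : ℝ) => y + y)^[n] x ∈
        (fun t : ℝ => (t : AddCircle (1 : ℝ))) '' Set.Icc α (α + 1 / 2)) :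
    interior F = ∅ :=
  invariant_set_in_halfcircle_nowhere_dense_general F α horb
end

section
/- Let G be a finite connected graph with vertex set A_n = σ₂^{-n}({1_∞}) (binary words of length n followed by 1_∞) in which two distinct sequences ī = i₀i₁... and j̄ = j₀j₁... are adjacent if and only if there exists k such that i_r = j_r for r < k, {i_k, j_k} = {0, 1}, and i_r = j_r = 1 for all r > k. Then G is a tree. -/
/-- The one-sided shift on the space `{0,1}^ℕ` of binary sequences. -/
def binShift (s : ℕ → Bool) : ℕ → Bool := fun i => s (i + 1)

/-- The constant sequence of 1's. -/
def onesSeq : ℕ → Bool := fun _ => true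

/-- The set `A n = σ₂⁻ⁿ({1_∞})`. -/
def shiftPreimOnes (n : ℕ) : Set (ℕ → Bool) := binShift^[n] ⁻¹' {onesSeq}

/-- The graph on `A n`: two distinct sequences `ī, j̄` are adjacent iff they agree
before some position `k`, differ at position `k` (i.e. `{i_k, j_k} = {0,1}`), and are
both constantly `1` after position `k`. -/
def pullbackGraph (n : ℕ) : SimpleGraph (shiftPreimOnes n) :=
  SimpleGraph.fromRel (fun s t =>
    ∃ k : ℕ, (∀ r < k, (s : ℕ → Bool) r = (t : ℕ → Bool) r) ∧
      (s : ℕ → Bool) k ≠ (t : ℕ → Bool) k ∧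
      ∀ r > k, (s : ℕ → Bool) r = true ∧ (t : ℕ → Bool) r = true)

/-!
Reading `false` as `0`, an edge of `pullbackGraph n` joins a sequence `s ≠ 1_∞` to the
sequence obtained by turning its last `0` into a `1`, and nothing else. So the graph is the
graph of a parent map on `A n` rooted at `1_∞`, and this map strictly lowers the number of
`0`'s. Hence every vertex reaches the root, and `v ↦ {v, parent v}` is a bijection from the
non-root vertices onto the edges, so there are `|A n| - 1` edges on a connected graph.
-/

namespace SimpleGraph

variable {V : Type*}

def parentGraph (r : V) (p : V → V) : SimpleGraph V :=
  fromRel fun u v => u ≠ r ∧ p u = v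

variable {r : V} {p : V → V} {ρ : V → ℕ}

lemma parentGraph_adj_parent (hρ : ∀ v ≠ r, ρ (p v) < ρ v) {v : V} (hv : v ≠ r) :
    (parentGraph r p).Adj v (p v) :=
  (fromRel_adj _ _ _).2
    ⟨fun h => (hρ v hv).ne (congrArg ρ h.symm), Or.inl ⟨hv, rfl⟩⟩

lemma parentGraph_reachable_root (hρ : ∀ v ≠ r, ρ (p v) < ρ v) (v : V) :
    (parentGraph r p).Reachable v r := by
  induction v using (measure ρ).wf.induction with
  | h v ih =>
    by_cases hv : v = r
    · exact hv ▸ Reachable.refl v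
    · exact (parentGraph_adj_parent hρ hv).reachable.trans (ih _ (hρ v hv))

lemma parentGraph_connected (hρ : ∀ v ≠ r, ρ (p v) < ρ v) : (parentGraph r p).Connected :=
  (connected_iff_exists_forall_reachable _).2
    ⟨r, fun v => (parentGraph_reachable_root hρ v).symm⟩

/-- Each edge is `s(v, p v)` for exactly one non-root vertex `v`: two non-root vertices that
are each other's parent would have ranks `ρ u < ρ v < ρ u`. -/
noncomputable def parentGraphEdgeEquiv (hρ : ∀ v ≠ r, ρ (p v) < ρ v) :
    {v // v ≠ r} ≃ (parentGraph r p).edgeSet :=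
  Equiv.ofBijective (fun v => ⟨s(v, p v), parentGraph_adj_parent hρ v.2⟩) <| by
    constructor
    · rintro ⟨u, hu⟩ ⟨v, hv⟩ huv
      rcases Sym2.eq_iff.1 (congrArg Subtype.val huv) with ⟨rfl, -⟩ | ⟨rfl, hvu⟩
      · rfl
      · have hcycle := (hρ _ hu).trans (hρ _ hv)
        dsimp only at hvu hcycle
        rw [hvu] at hcycle
        exact (lt_irrefl _ hcycle).elim
    · rintro ⟨e, he⟩
      induction e using Sym2.ind with
      | h u v =>
        obtain ⟨-, ⟨hu, rfl⟩ | ⟨hv, rfl⟩⟩ := (fromRel_adj _ _ _).1 ((mem_edgeSet _).1 he)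
        · exact ⟨⟨u, hu⟩, rfl⟩
        · exact ⟨⟨v, hv⟩, Subtype.ext Sym2.eq_swap⟩

theorem parentGraph_isTree [Finite V] (hρ : ∀ v ≠ r, ρ (p v) < ρ v) :
    (parentGraph r p).IsTree := by
  classical
  refine isTree_iff_connected_and_card.2 ⟨parentGraph_connected hρ, ?_⟩
  calc Nat.card (parentGraph r p).edgeSet + 1 = Nat.card {v // v ≠ r} + 1 := by
        rw [Nat.card_congr (parentGraphEdgeEquiv hρ)]
    _ = Nat.card V := by
        rw [← Finite.card_option, Nat.card_congr (Equiv.optionSubtypeNe r)]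

end SimpleGraph

open SimpleGraph

lemma binShift_iterate_apply (m : ℕ) (s : ℕ → Bool) (i : ℕ) :
    binShift^[m] s i = s (i + m) := by
  induction m generalizing s with
  | zero => rfl
  | succ m ih => rw [Function.iterate_succ_apply, ih]; rfl

lemma mem_shiftPreimOnes {n : ℕ} {s : ℕ → Bool} :
    s ∈ shiftPreimOnes n ↔ ∀ i ≥ n, s i = true := by
  refine ⟨fun hs i hi => ?_, fun h => funext fun i => ?_⟩
  · simpa [binShift_iterate_apply, Nat.sub_add_cancel hi, onesSeq] using congrFun hs (i - n)
  · simpa [binShift_iterate_apply, onesSeq] using h (i + n) (Nat.le_add_left n i)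

lemma onesSeq_mem_shiftPreimOnes (n : ℕ) : onesSeq ∈ shiftPreimOnes n :=
  mem_shiftPreimOnes.2 fun _ _ => rfl

lemma lt_of_mem_shiftPreimOnes {n k : ℕ} {s : ℕ → Bool} (hs : s ∈ shiftPreimOnes n)
    (hk : s k = false) : k < n :=
  lt_of_not_ge fun h => by simp [mem_shiftPreimOnes.1 hs k h] at hk

instance (n : ℕ) : Finite (shiftPreimOnes n) :=
  Finite.of_injective (fun s : shiftPreimOnes n => fun i : Fin n => (s : ℕ → Bool) i) <| by
    intro s t hst
    refine Subtype.ext (funext fun i => ?_)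
    rcases lt_or_ge i n with hi | hi
    · exact congrFun hst ⟨i, hi⟩
    · rw [mem_shiftPreimOnes.1 s.2 i hi, mem_shiftPreimOnes.1 t.2 i hi]

def lastFalse (n : ℕ) (s : ℕ → Bool) : ℕ :=
  Nat.findGreatest (fun i => s i = false) n

def setLastFalse (n : ℕ) (s : ℕ → Bool) : ℕ → Bool :=
  Function.update s (lastFalse n s) true

def RaisesAt (k : ℕ) (s t : ℕ → Bool) : Prop :=
  (∀ r < k, s r = t r) ∧ s k = false ∧ t k = true ∧ ∀ r > k, s r = true ∧ t r = true

def falseCount (n : ℕ) (s : ℕ → Bool) : ℕ :=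
  ((Finset.range n).filter fun i => s i = false).card

section

variable {n k : ℕ} {s t : ℕ → Bool}

lemma lastFalse_eq_of_forall_gt (hs : s ∈ shiftPreimOnes n) (hk : s k = false)
    (htail : ∀ r > k, s r = true) : lastFalse n s = k :=
  Nat.findGreatest_eq_iff.2 ⟨(lt_of_mem_shiftPreimOnes hs hk).le, fun _ => hk,
    fun r hr _ => by simp [htail r hr]⟩

lemma lastFalse_spec (hs : s ∈ shiftPreimOnes n) (hne : s ≠ onesSeq) :
    s (lastFalse n s) = false ∧ ∀ r > lastFalse n s, s r = true := by
  obtain ⟨i, hi⟩ : ∃ i, s i = false := by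
    by_contra! h
    exact hne (funext fun i => by simpa [onesSeq] using h i)
  refine ⟨Nat.findGreatest_spec (P := fun i => s i = false)
    (lt_of_mem_shiftPreimOnes hs hi).le hi, fun r hr => ?_⟩
  rcases le_or_gt r n with hrn | hrn
  · simpa using Nat.findGreatest_is_greatest hr hrn
  · exact mem_shiftPreimOnes.1 hs r hrn.le

lemma setLastFalse_mem (hs : s ∈ shiftPreimOnes n) : setLastFalse n s ∈ shiftPreimOnes n :=
  mem_shiftPreimOnes.2 fun i hi => by
    rw [setLastFalse, Function.update_apply]
    split_ifs
    · rfl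
    · exact mem_shiftPreimOnes.1 hs i hi

lemma falseCount_setLastFalse_lt (hs : s ∈ shiftPreimOnes n) (hne : s ≠ onesSeq) :
    falseCount n (setLastFalse n s) < falseCount n s := by
  have hlast := (lastFalse_spec hs hne).1
  have hmem : lastFalse n s ∈ (Finset.range n).filter fun i => s i = false :=
    Finset.mem_filter.2 ⟨Finset.mem_range.2 (lt_of_mem_shiftPreimOnes hs hlast), hlast⟩
  calc falseCount n (setLastFalse n s)
      = (((Finset.range n).filter fun i => s i = false).erase (lastFalse n s)).card := by
        rw [falseCount, setLastFalse]
        congr 1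
        ext i
        by_cases hi : i = lastFalse n s <;> simp [hi]
    _ < falseCount n s := Finset.card_erase_lt_of_mem hmem

lemma setLastFalse_eq_iff (hs : s ∈ shiftPreimOnes n) :
    (s ≠ onesSeq ∧ setLastFalse n s = t) ↔ ∃ k, RaisesAt k s t := by
  constructor
  · rintro ⟨hne, rfl⟩
    obtain ⟨hlast, htail⟩ := lastFalse_spec hs hne
    refine ⟨lastFalse n s, fun r hr => ?_, hlast, by simp [setLastFalse], fun r hr => ?_⟩
    · simp [setLastFalse, hr.ne]
    · simp [setLastFalse, hr.ne', htail r hr]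
  · rintro ⟨k, hlt, hsk, htk, hgt⟩
    refine ⟨fun h => by simp [h, onesSeq] at hsk, funext fun r => ?_⟩
    rw [setLastFalse, lastFalse_eq_of_forall_gt hs hsk fun r hr => (hgt r hr).1,
      Function.update_apply]
    rcases lt_trichotomy r k with hr | rfl | hr
    · simp [hr.ne, hlt r hr]
    · simp [htk]
    · simp [hr.ne', (hgt r hr).1, (hgt r hr).2]

end

def onesVertex (n : ℕ) : shiftPreimOnes n :=
  ⟨onesSeq, onesSeq_mem_shiftPreimOnes n⟩

def parentVertex (n : ℕ) (s : shiftPreimOnes n) : shiftPreimOnes n :=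
  ⟨setLastFalse n s, setLastFalse_mem s.2⟩

lemma parentVertex_eq_iff {n : ℕ} {s t : shiftPreimOnes n} :
    (s ≠ onesVertex n ∧ parentVertex n s = t) ↔ ∃ k, RaisesAt k s t := by
  rw [← setLastFalse_eq_iff s.2, onesVertex, parentVertex, Ne, Ne, Subtype.ext_iff,
    Subtype.ext_iff]

lemma pullbackGraph_adj_iff {n : ℕ} {s t : shiftPreimOnes n} :
    (pullbackGraph n).Adj s t ↔ s ≠ t ∧ ((∃ k, RaisesAt k s t) ∨ ∃ k, RaisesAt k t s) := by
  rw [pullbackGraph, fromRel_adj]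
  refine and_congr_right fun _ => ⟨?_, ?_⟩
  · rintro (⟨k, hlt, hne, hgt⟩ | ⟨k, hlt, hne, hgt⟩) <;> cases hsk : (s : ℕ → Bool) k
    · exact Or.inl ⟨k, hlt, hsk, by simpa [hsk] using hne.symm, hgt⟩
    · exact Or.inr ⟨k, fun r hr => (hlt r hr).symm, by simpa [hsk] using hne.symm, hsk,
        fun r hr => (hgt r hr).symm⟩
    · exact Or.inl ⟨k, fun r hr => (hlt r hr).symm, hsk, by simpa [hsk] using hne,
        fun r hr => (hgt r hr).symm⟩
    · exact Or.inr ⟨k, hlt, by simpa [hsk] using hne, hsk, hgt⟩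
  · rintro (⟨k, hlt, hsk, htk, hgt⟩ | ⟨k, hlt, htk, hsk, hgt⟩)
    · exact Or.inl ⟨k, hlt, by simp [hsk, htk], hgt⟩
    · exact Or.inr ⟨k, hlt, by simp [hsk, htk], hgt⟩

lemma pullbackGraph_eq_parentGraph (n : ℕ) :
    pullbackGraph n = parentGraph (onesVertex n) (parentVertex n) := by
  ext s t
  rw [pullbackGraph_adj_iff, parentGraph, fromRel_adj, parentVertex_eq_iff, parentVertex_eq_iff]

/-- The graph on `A n = σ₂⁻ⁿ({1_∞})` given by the above adjacency is a tree. -/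
theorem pullbackGraph_isTree (n : ℕ) : (pullbackGraph n).IsTree := by
  rw [pullbackGraph_eq_parentGraph]
  exact parentGraph_isTree (ρ := falseCount n ∘ Subtype.val) fun s hs =>
    falseCount_setLastFalse_lt s.2 fun h => hs (Subtype.ext h)
end

section
/- Let X be a compact metric space, f : X → X continuous, and suppose (K_i)_{i≥0} is a sequence of nonempty compact connected subsets of X with K_i ∩ K_{i+1} ≠ ∅, f(K_{i+1}) = K_i, and diam(K_i) → 0. If f has only finitely many fixed points in X, then there is a fixed point a of f such that every sequence x_i ∈ K_i converges to a. -/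
/-!
On `K (i + 1)` the displacement `dist x (f x)` is at most `diam (K i) + diam (K (i + 1))`, because
`f` maps `K (i + 1)` into `K i` and the two sets meet; so it tends to zero, and by compactness
`K i` eventually lies in a small ball around some fixed point. Since the fixed points are finitely
many, balls of a fixed small radius around them are disjoint, and since consecutive `K i` meet,
the fixed point cannot change from one index to the next.
-/

open Metric Filter Set Function Topology

theorem Set.Finite.exists_pos_pairwiseDisjoint_ball {X : Type*} [MetricSpace X]
    {F : Set X} (hF : F.Finite) : ∃ r > 0, F.PairwiseDisjoint (ball · r) := by
  have hsmall : ∀ᶠ r in 𝓝[>] (0 : ℝ), ∀ p ∈ F.offDiag, r + r ≤ dist p.1 p.2 := by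
    refine hF.offDiag.eventually_all.2 fun p hp => ?_
    have hd : 0 < dist p.1 p.2 / 2 := half_pos (dist_pos.2 (mem_offDiag.1 hp).2.2)
    filter_upwards [nhdsWithin_le_nhds (gt_mem_nhds hd)] with r hr
    linarith
  obtain ⟨r, hr, hr0⟩ := (hsmall.and self_mem_nhdsWithin).exists
  exact ⟨r, hr0, fun a ha b hb hab => ball_disjoint_ball (hr (a, b) ⟨ha, hb, hab⟩)⟩

theorem exists_mem_fixedPoints_dist_lt_of_dist_apply_lt {X : Type*} [MetricSpace X]
    [CompactSpace X] {f : X → X} (hf : Continuous f) {δ : ℝ} (hδ : 0 < δ) :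
    ∃ ε > 0, ∀ x, dist x (f x) < ε → ∃ a ∈ fixedPoints f, dist x a < δ := by
  set C := ⋂ a ∈ fixedPoints f, {x | δ ≤ dist x a}
  have hC : IsCompact C := IsClosed.isCompact <| isClosed_biInter fun a _ =>
    isClosed_le continuous_const (continuous_id.dist continuous_const)
  have hpos : ∀ x ∈ C, 0 < dist x (f x) := fun x hx => dist_pos.2 fun hfx => by
    have hxx : δ ≤ dist x x := mem_iInter₂.1 hx x hfx.symm
    exact hδ.not_ge (by simpa using hxx)
  obtain ⟨ε, hε, hεC⟩ := hC.exists_forall_le' (continuous_id.dist hf).continuousOn hpos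
  refine ⟨ε, hε, fun x hx => ?_⟩
  by_contra! hfar
  exact (hεC x (mem_iInter₂.2 hfar)).not_gt hx

theorem Set.PairwiseDisjoint.exists_eventually_subset_of_chain {α X : Type*} {F : Set α}
    {U : α → Set X} (hU : F.PairwiseDisjoint U) {K : ℕ → Set X}
    (hchain : ∀ i, (K i ∩ K (i + 1)).Nonempty) (h : ∀ᶠ i in atTop, ∃ a ∈ F, K i ⊆ U a) :
    ∃ a ∈ F, ∀ᶠ i in atTop, K i ⊆ U a := by
  obtain ⟨N, hN⟩ := eventually_atTop.1 h
  obtain ⟨a, ha, hKa⟩ := hN N le_rfl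
  refine ⟨a, ha, eventually_atTop.2 ⟨N, fun i hi => ?_⟩⟩
  induction i, hi using Nat.le_induction with
  | base => exact hKa
  | succ i hi ih =>
    obtain ⟨b, hb, hKb⟩ := hN (i + 1) (by omega)
    obtain ⟨z, hzi, hzi'⟩ := hchain i
    rwa [hU.elim_set ha hb z (ih hzi) (hKb hzi')]

theorem eventually_exists_mem_fixedPoints_subset_ball {X : Type*} [MetricSpace X]
    [CompactSpace X] {f : X → X} (hf : Continuous f) {K : ℕ → Set X}
    (hchain : ∀ i, (K i ∩ K (i + 1)).Nonempty) (hmaps : ∀ i, MapsTo f (K (i + 1)) (K i))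
    (hdiam : Tendsto (fun i => diam (K i)) atTop (𝓝 0)) :
    ∀ δ > 0, ∀ᶠ i in atTop, ∃ a ∈ fixedPoints f, K i ⊆ ball a δ := by
  intro δ hδ
  obtain ⟨ε, hε, hnear⟩ := exists_mem_fixedPoints_dist_lt_of_dist_apply_lt hf (half_pos hδ)
  have hdiam' : Tendsto (fun i => diam (K i) + diam (K (i + 1))) atTop (𝓝 0) := by
    simpa using hdiam.add (hdiam.comp (tendsto_add_atTop_nat 1))
  rw [← map_add_atTop_eq_nat 1, eventually_map]
  filter_upwards [hdiam'.eventually_lt_const (lt_min hε (half_pos hδ))] with i hi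
  have hdisplace : ∀ x ∈ K (i + 1), dist x (f x) < ε := fun x hx =>
    calc dist x (f x) ≤ diam (K i ∪ K (i + 1)) :=
          dist_le_diam_of_mem isBounded_of_compactSpace (Or.inr hx) (Or.inl (hmaps i hx))
      _ ≤ diam (K i) + diam (K (i + 1)) := diam_union' (hchain i)
      _ < ε := hi.trans_le (min_le_left _ _)
  obtain ⟨x₀, -, hx₀⟩ := hchain i
  obtain ⟨a, ha, hx₀a⟩ := hnear x₀ (hdisplace x₀ hx₀)
  refine ⟨a, ha, fun x hx => ?_⟩
  have hxx₀ : dist x x₀ < δ / 2 :=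
    calc dist x x₀ ≤ diam (K (i + 1)) := dist_le_diam_of_mem isBounded_of_compactSpace hx hx₀
      _ ≤ diam (K i) + diam (K (i + 1)) := le_add_of_nonneg_left diam_nonneg
      _ < δ / 2 := hi.trans_le (min_le_right _ _)
  calc dist x a ≤ dist x x₀ + dist x₀ a := dist_triangle _ _ _
    _ < δ := by linarith

theorem chain_converges_to_fixed_point_of_finite_fixed_general {X : Type*} [MetricSpace X]
    [CompactSpace X] (f : X → X) (hf : Continuous f)
    (hfix : {x : X | f x = x}.Finite)
    (K : ℕ → Set X)
    (hchain : ∀ i, (K i ∩ K (i + 1)).Nonempty)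
    (hmap : ∀ i, f '' K (i + 1) = K i)
    (hdiam : Filter.Tendsto (fun i => Metric.diam (K i)) Filter.atTop (nhds 0)) :
    ∃ a : X, f a = a ∧
      ∀ x : ℕ → X, (∀ i, x i ∈ K i) →
        Filter.Tendsto x Filter.atTop (nhds a) := by
  have hnear := eventually_exists_mem_fixedPoints_subset_ball hf hchain
    (fun i => mapsTo_iff_image_subset.2 (hmap i).subset) hdiam
  obtain ⟨r, hr, hdisj⟩ := (hfix : (fixedPoints f).Finite).exists_pos_pairwiseDisjoint_ball
  obtain ⟨a, ha, hKa⟩ := hdisj.exists_eventually_subset_of_chain hchain (hnear r hr)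
  refine ⟨a, ha, fun x hx => Metric.tendsto_nhds.2 fun ε hε => ?_⟩
  filter_upwards [hnear _ (lt_min hε hr), hKa] with i ⟨b, hb, hKb⟩ hKai
  have hba : b = a :=
    hdisj.elim_set hb ha (x i) (ball_subset_ball (min_le_right _ _) (hKb (hx i))) (hKai (hx i))
  exact hba ▸ (mem_ball.1 (hKb (hx i))).trans_le (min_le_left _ _)

/-- Let `X` be a compact metric space and `f : X → X` continuous with only finitely many
fixed points. If `(K i)` is a chain of nonempty compact connected subsets with
`K i ∩ K (i+1) ≠ ∅`, `f (K (i+1)) = K i` and `diam (K i) → 0`, then there is a fixed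
point `a` of `f` such that every sequence of points `x i ∈ K i` converges to `a`. -/
theorem chain_converges_to_fixed_point_of_finite_fixed {X : Type*} [MetricSpace X]
    [CompactSpace X] (f : X → X) (hf : Continuous f)
    (hfix : {x : X | f x = x}.Finite)
    (K : ℕ → Set X)
    (hne : ∀ i, (K i).Nonempty) (hc : ∀ i, IsCompact (K i))
    (hconn : ∀ i, IsConnected (K i))
    (hchain : ∀ i, (K i ∩ K (i + 1)).Nonempty)
    (hmap : ∀ i, f '' K (i + 1) = K i)
    (hdiam : Filter.Tendsto (fun i => Metric.diam (K i)) Filter.atTop (nhds 0)) :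
    ∃ a : X, f a = a ∧
      ∀ x : ℕ → X, (∀ i, x i ∈ K i) →
        Filter.Tendsto x Filter.atTop (nhds a) :=
  chain_converges_to_fixed_point_of_finite_fixed_general f hf hfix K hchain hmap hdiam
end
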